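/- arXiv:2310.07501 — 7 statements merged into one kernel-verified Lean document; each statement's English description precedes it below -/
import Mathlib

section
/- Let n ≥ 1 be an integer and set m = (3(2n+1))^2 + 1. If m is squarefree, then the class number h(m) of the real quadratic field ℚ(√m) is strictly greater than 1. -/
/-!
Put `t = 3(2n+1)`, so `m = t² + 1 ≡ 2 (mod 4)` and the ring of integers of `ℚ(√m)` is `ℤ[√m]`.
There `(√m - 1)(√m + 1) = t²` is divisible by `3` while neither factor is, so `3` is not prime.
But `3` is irreducible, because no element of `ℤ[√m]` has norm `±3`. Hence `ℤ[√m]` is not a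
principal ideal domain, i.e. the class number is not `1`.
-/

open Polynomial NumberField

theorem Int.natAbs_sq_ne_three (x : ℤ) : (x ^ 2).natAbs ≠ 3 := by
  rw [Int.natAbs_pow]
  intro h
  have : x.natAbs < 2 := by nlinarith
  interval_cases x.natAbs <;> omega

/-- Descent: multiplying `x + y√d`, `d = t² + 1`, by the unit `t - √d` of norm `-1` gives
`(d y - t x) + (x - t y)√d`, and `|x - t y| < |y|` as soon as `|x² - d y²| < 2t`. -/
theorem Int.natAbs_sq_sub_mul_sq_ne_three {t : ℤ} (ht : 2 ≤ t) (x y : ℤ) :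
    (x ^ 2 - (t ^ 2 + 1) * y ^ 2).natAbs ≠ 3 := by
  induction hk : y.natAbs using Nat.strong_induction_on generalizing x y with
  | _ k ih =>
    intro hN
    obtain rfl | hy := eq_or_ne y 0
    · exact Int.natAbs_sq_ne_three x (by simpa using hN)
    set X : ℤ := |x|
    set Y : ℤ := |y|
    have hN' : (X ^ 2 - (t ^ 2 + 1) * Y ^ 2).natAbs = 3 := by simpa [X, Y, sq_abs] using hN
    have hY : 1 ≤ Y := Int.one_le_abs hy
    have hX : 0 ≤ X := abs_nonneg x
    have hN3 : |X ^ 2 - (t ^ 2 + 1) * Y ^ 2| = 3 := by rw [Int.abs_eq_natAbs, hN']; rfl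
    have hupper : X < (t + 1) * Y := by
      by_contra! h
      nlinarith [abs_le.mp hN3.le, mul_le_mul h h (by positivity) hX]
    have hlower : (t - 1) * Y < X := by
      by_contra! h
      nlinarith [abs_le.mp hN3.le, mul_le_mul h h hX (by nlinarith)]
    have hsmaller : (X - t * Y).natAbs < k := by
      rw [← hk]
      zify
      exact abs_lt.mpr ⟨by linarith, by linarith⟩
    refine ih _ hsmaller ((t ^ 2 + 1) * Y - t * X) (X - t * Y) rfl ?_
    rw [← hN', ← Int.natAbs_neg]
    congr 1
    ring

namespace Zsqrtd

variable {d : ℤ}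

theorem irreducible_natCast_of_natAbs_norm_ne {p : ℕ} (hp : p.Prime)
    (hnorm : ∀ z : ℤ√d, z.norm.natAbs ≠ p) : Irreducible (p : ℤ√d) := by
  refine ⟨fun hunit => ?_, fun a b hab => ?_⟩
  · rw [isUnit_iff_norm_isUnit, norm_natCast, Int.isUnit_iff_natAbs_eq, Int.natAbs_mul,
      Int.natAbs_natCast] at hunit
    exact hp.one_lt.ne' (Nat.eq_one_of_mul_eq_one_right hunit)
  · have hab' : a.norm.natAbs * b.norm.natAbs = p ^ 2 := by
      rw [← Int.natAbs_mul, ← norm_mul, ← hab, norm_natCast, Int.natAbs_mul, Int.natAbs_natCast,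
        sq]
    obtain ⟨k, hk, hka⟩ := (Nat.dvd_prime_pow hp).mp (Dvd.intro _ hab')
    interval_cases k
    · exact .inl (norm_eq_one_iff.mp (by simpa using hka))
    · exact absurd (by simpa using hka) (hnorm a)
    · refine .inr (norm_eq_one_iff.mp ?_)
      rw [hka] at hab'
      exact (Nat.mul_eq_left (pow_ne_zero 2 hp.ne_zero)).mp hab'

theorem not_prime_natCast_of_dvd_sub_one {p : ℕ} (hp : p ≠ 1) (hdvd : (p : ℤ) ∣ d - 1) :
    ¬ Prime (p : ℤ√d) := by
  intro hprime
  rw [← Int.cast_natCast] at hprime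
  -- `(1 + √d)(-1 + √d) = d - 1`, but `p` divides neither factor: their `√d`-coefficient is `1`.
  have hprod : ((p : ℤ) : ℤ√d) ∣ ⟨1, 1⟩ * ⟨-1, 1⟩ := by
    rw [intCast_dvd]
    simp [neg_add_eq_sub, hdvd]
  rcases hprime.dvd_or_dvd hprod with h | h <;>
    exact hp (by exact_mod_cast Int.eq_one_of_dvd_one (by positivity) ((intCast_dvd _ _).mp h).2)

end Zsqrtd

theorem Rat.exists_intCast_eq_of_squarefree_mul_sq {d : ℤ} (hd : Squarefree d) {w : ℚ} {k : ℤ}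
    (h : d * w ^ 2 = k) : ∃ b : ℤ, (b : ℚ) = w := by
  refine ⟨w.num, Rat.coe_int_num_of_den_eq_one ?_⟩
  have hcop : IsCoprime ((w.den : ℤ) ^ 2) (w.num ^ 2) :=
    (Int.isCoprime_iff_gcd_eq_one.mpr (show Int.gcd w.num w.den = 1 from w.reduced)).symm.pow
  have hZ : d * w.num ^ 2 = k * (w.den : ℤ) ^ 2 := by
    have : (d : ℚ) * w.num ^ 2 = k * (w.den : ℚ) ^ 2 := by
      rw [← Rat.mul_den_eq_num, mul_pow, ← mul_assoc, h]
    exact_mod_cast this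
  have hdvd : (w.den : ℤ) ^ 2 ∣ d := hcop.dvd_of_dvd_mul_right ⟨k, by rw [hZ, mul_comm]⟩
  exact Int.natAbs_natCast w.den ▸ Int.isUnit_iff_natAbs_eq.mp (hd _ (by rwa [← sq]))

theorem Int.not_isSquare_of_squarefree {d : ℤ} (hsf : Squarefree d) (hd : d ≠ 1) :
    ¬ IsSquare d := by
  rintro ⟨r, rfl⟩
  rcases Int.isUnit_iff.mp (hsf r dvd_rfl) with rfl | rfl <;> simp at hd

theorem Int.two_dvd_of_four_dvd_sq_sub_mul_sq {d a b : ℤ} (hd : d % 4 = 2 ∨ d % 4 = 3)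
    (h : 4 ∣ a ^ 2 - d * b ^ 2) : 2 ∣ a ∧ 2 ∣ b := by
  obtain ⟨k, rfl | rfl⟩ := Int.even_or_odd' a <;> obtain ⟨l, rfl | rfl⟩ := Int.even_or_odd' b <;>
    ring_nf at h <;> omega

theorem Rat.exists_intCast_eq_of_trace_norm {d : ℤ} (hsf : Squarefree d)
    (hd : d % 4 = 2 ∨ d % 4 = 3) {p q : ℚ} {A B : ℤ} (hA : (A : ℚ) = 2 * p)
    (hB : (B : ℚ) = p ^ 2 - d * q ^ 2) : (∃ a : ℤ, (a : ℚ) = p) ∧ ∃ b : ℤ, (b : ℚ) = q := by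
  obtain ⟨b, hb⟩ := Rat.exists_intCast_eq_of_squarefree_mul_sq hsf (w := 2 * q)
    (k := A ^ 2 - 4 * B) (by push_cast; rw [hA, hB]; ring)
  have h4 : A ^ 2 - d * b ^ 2 = 4 * B := by
    have : (A : ℚ) ^ 2 - d * b ^ 2 = 4 * B := by rw [hA, hB, hb]; ring
    exact_mod_cast this
  obtain ⟨⟨a, rfl⟩, ⟨c, rfl⟩⟩ := Int.two_dvd_of_four_dvd_sq_sub_mul_sq hd ⟨B, h4⟩
  push_cast at hA hb
  exact ⟨⟨a, by linarith⟩, ⟨c, by linarith⟩⟩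

theorem Polynomial.IsSplittingField.exists_sq_eq_and_adjoin_eq_top {F K : Type*} [Field F]
    [Field K] [Algebra F K] {a : F} (h : IsSplittingField F K (X ^ 2 - C a)) :
    ∃ s : K, s ^ 2 = algebraMap F K a ∧ Algebra.adjoin F {s} = ⊤ := by
  obtain ⟨s, hs⟩ := h.splits.exists_eval_eq_zero
    (by rw [degree_map, degree_X_pow_sub_C two_pos]; norm_num)
  have hs2 : s ^ 2 = algebraMap F K a := by simpa [sub_eq_zero] using hs
  refine ⟨s, hs2, eq_top_iff.mpr ?_⟩
  rw [← h.adjoin_rootSet]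
  refine Algebra.adjoin_le fun r hr => ?_
  have hr2 : r ^ 2 = s ^ 2 := by
    rw [hs2]
    simpa [sub_eq_zero] using (mem_rootSet.mp hr).2
  rcases sq_eq_sq_iff_eq_or_eq_neg.mp hr2 with rfl | rfl
  · exact Algebra.subset_adjoin rfl
  · exact neg_mem (Algebra.subset_adjoin rfl)

theorem Algebra.exists_eq_add_mul_of_adjoin_eq_top {F K : Type*} [CommRing F] [CommRing K]
    [Algebra F K] {s : K} {a : F} (hs : s ^ 2 = algebraMap F K a)
    (hK : Algebra.adjoin F {s} = ⊤) (z : K) :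
    ∃ p q : F, z = algebraMap F K p + algebraMap F K q * s := by
  induction (hK ▸ Algebra.mem_top : z ∈ Algebra.adjoin F {s}) using Algebra.adjoin_induction with
  | mem x hx => exact ⟨0, 1, by simp [Set.mem_singleton_iff.mp hx]⟩
  | algebraMap r => exact ⟨r, 0, by simp⟩
  | add x y _ _ hx hy =>
    obtain ⟨⟨p₁, q₁, rfl⟩, ⟨p₂, q₂, rfl⟩⟩ := And.intro hx hy
    exact ⟨p₁ + p₂, q₁ + q₂, by simp only [map_add]; ring⟩
  | mul x y _ _ hx hy =>
    obtain ⟨⟨p₁, q₁, rfl⟩, ⟨p₂, q₂, rfl⟩⟩ := And.intro hx hy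
    refine ⟨p₁ * p₂ + a * (q₁ * q₂), p₁ * q₂ + q₁ * p₂, ?_⟩
    simp only [map_add, map_mul]
    linear_combination (algebraMap F K q₁ * algebraMap F K q₂) * hs

theorem minpoly_algebraMap_add_algebraMap_mul {F K : Type*} [Field F] [Field K] [Algebra F K]
    {s : K} {a : F} (hs : s ^ 2 = algebraMap F K a) (hsF : s ∉ (algebraMap F K).range) (p : F)
    {q : F} (hq : q ≠ 0) :
    minpoly F (algebraMap F K p + algebraMap F K q * s) =
      X ^ 2 - C (2 * p) * X + C (p ^ 2 - a * q ^ 2) := by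
  set z := algebraMap F K p + algebraMap F K q * s
  set P : F[X] := X ^ 2 - C (2 * p) * X + C (p ^ 2 - a * q ^ 2)
  have hPz : aeval z P = 0 := by
    simp only [P, z, map_add, map_sub, map_mul, map_pow, map_ofNat, aeval_X, aeval_C]
    linear_combination (algebraMap F K q) ^ 2 * hs
  have hP : P.Monic := by simp only [P]; monicity!
  have hzF : z ∉ (algebraMap F K).range := by
    rintro ⟨r, hr⟩
    refine hsF ⟨(r - p) / q, ?_⟩
    rw [map_div₀, div_eq_iff ((_root_.map_ne_zero _).mpr hq), map_sub]
    linear_combination hr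
  have hz : IsIntegral F z := ⟨P, hP, hPz⟩
  refine (eq_of_monic_of_dvd_of_natDegree_le (minpoly.monic hz) hP (minpoly.dvd F z hPz) ?_).symm
  exact (show P.natDegree = 2 by simp only [P]; compute_degree!) ▸
    (minpoly.two_le_natDegree_iff hz).mpr hzF

section QuadraticField

variable {K : Type*} [Field K] [CharZero K] {d : ℤ}

theorem exists_intCast_eq_of_isIntegral_algebraMap_add_algebraMap_mul (hsf : Squarefree d)
    (hd : d % 4 = 2 ∨ d % 4 = 3) {s : K} (hs : s ^ 2 = d) {p q : ℚ}
    (hint : IsIntegral ℤ (algebraMap ℚ K p + algebraMap ℚ K q * s)) :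
    (∃ a : ℤ, (a : ℚ) = p) ∧ ∃ b : ℤ, (b : ℚ) = q := by
  obtain rfl | hq := eq_or_ne q 0
  · rw [map_zero, zero_mul, add_zero, isIntegral_algebraMap_iff (algebraMap ℚ K).injective] at hint
    exact ⟨IsIntegrallyClosed.isIntegral_iff.mp hint, 0, Int.cast_zero⟩
  have hsQ : s ∉ (algebraMap ℚ K).range := by
    rintro ⟨r, rfl⟩
    refine Int.not_isSquare_of_squarefree hsf (by omega) (Rat.isSquare_intCast_iff.mp ⟨r, ?_⟩)
    apply (algebraMap ℚ K).injective
    rw [← sq, map_pow, hs, map_intCast]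
  set z := algebraMap ℚ K p + algebraMap ℚ K q * s
  -- The minimal polynomial of an algebraic integer has integer coefficients; here they are the
  -- trace `2p` and the norm `p² - d q²`.
  have hmin := minpoly_algebraMap_add_algebraMap_mul (hs.trans (map_intCast _ d).symm) hsQ p hq
  rw [minpoly.isIntegrallyClosed_eq_field_fractions' ℚ hint] at hmin
  have h1 := congrArg (coeff · 1) hmin
  have h0 := congrArg (coeff · 0) hmin
  simp only [coeff_map, coeff_add, coeff_sub, coeff_X_pow, coeff_C_mul, coeff_X, coeff_C,
    eq_intCast] at h1 h0
  norm_num at h1 h0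
  exact Rat.exists_intCast_eq_of_trace_norm hsf hd (A := -(minpoly ℤ z).coeff 1)
    (by push_cast; linarith) h0

theorem nonempty_zsqrtd_ringEquiv_ringOfIntegers (hsf : Squarefree d)
    (hd : d % 4 = 2 ∨ d % 4 = 3) {s : K} (hs : s ^ 2 = d) (hK : Algebra.adjoin ℚ {s} = ⊤) :
    Nonempty (ℤ√d ≃+* 𝓞 K) := by
  obtain ⟨s, rfl⟩ : ∃ s' : 𝓞 K, (s' : K) = s :=
    ⟨⟨s, .of_pow two_pos (hs ▸ isIntegral_algebraMap (x := d))⟩, rfl⟩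
  have hs' : s * s = d := RingOfIntegers.ext <| by simp [← sq, hs]
  refine ⟨.ofBijective (Zsqrtd.lift ⟨s, hs'⟩) ⟨Zsqrtd.lift_injective _ fun n h =>
    Int.not_isSquare_of_squarefree hsf (by omega) ⟨n, h⟩, fun x => ?_⟩⟩
  obtain ⟨p, q, hx⟩ := Algebra.exists_eq_add_mul_of_adjoin_eq_top
    (hs.trans (map_intCast _ d).symm) hK (x : K)
  obtain ⟨⟨a, rfl⟩, ⟨b, rfl⟩⟩ :=
    exists_intCast_eq_of_isIntegral_algebraMap_add_algebraMap_mul hsf hd hs (p := p) (q := q)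
      (hx ▸ x.isIntegral_coe)
  refine ⟨⟨a, b⟩, RingOfIntegers.ext ?_⟩
  simp [Zsqrtd.lift_apply_apply, hx]

end QuadraticField

theorem stmt_2_general (n : ℕ) (m : ℕ) (hm : m = (3 * (2 * n + 1)) ^ 2 + 1)
    (hsf : Squarefree m) (K : Type*) [Field K] [NumberField K]
    (hK : IsSplittingField ℚ K (X ^ 2 - C (m : ℚ))) :
    1 < NumberField.classNumber K := by
  set t : ℤ := 3 * (2 * n + 1) with ht
  have hmt : (m : ℤ) = t ^ 2 + 1 := by rw [hm]; push_cast; ring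
  have hm4 : (m : ℤ) % 4 = 2 := by rw [hm]; push_cast; ring_nf; omega
  obtain ⟨s, hs, hadj⟩ := hK.exists_sq_eq_and_adjoin_eq_top
  obtain ⟨e⟩ := nonempty_zsqrtd_ringEquiv_ringOfIntegers (Int.squarefree_natCast.mpr hsf)
    (.inl hm4) (s := s) (by simpa using hs) hadj
  by_contra! h
  have : IsPrincipalIdealRing (𝓞 K) :=
    classNumber_eq_one_iff.mp (by have := classNumber_pos K; omega)
  have hirr : Irreducible ((3 : ℕ) : ℤ√m) :=
    Zsqrtd.irreducible_natCast_of_natAbs_norm_ne Nat.prime_three fun z => by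
      have hz : z.norm = z.re ^ 2 - (t ^ 2 + 1) * z.im ^ 2 := by
        rw [Zsqrtd.norm_def]; linear_combination (-z.im ^ 2) * hmt
      exact hz ▸ Int.natAbs_sq_sub_mul_sq_ne_three (by omega) z.re z.im
  have hprime : Prime ((3 : ℕ) : ℤ√m) :=
    (MulEquiv.prime_iff e).mp ((MulEquiv.irreducible_iff e).mpr hirr).prime
  exact Zsqrtd.not_prime_natCast_of_dvd_sub_one (by norm_num)
    ⟨3 * (2 * n + 1) ^ 2, by rw [hmt, ht]; push_cast; ring⟩ hprime

/-- If `n ≥ 1` is an integer and `m = (3(2n+1))^2 + 1` is squarefree,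
then the class number of the real quadratic field `ℚ(√m)` is strictly greater than `1`. -/
theorem stmt_2 (n : ℕ) (hn : 1 ≤ n) (m : ℕ) (hm : m = (3 * (2 * n + 1)) ^ 2 + 1)
    (hsf : Squarefree m) (K : Type*) [Field K] [NumberField K]
    (hK : IsSplittingField ℚ K (X ^ 2 - C (m : ℚ))) :
    1 < NumberField.classNumber K :=
  stmt_2_general n m hm hsf K hK
end

section
/- Let n ≥ 1 be an integer and set m = (6(2n+1))^2 − 2. If m is squarefree, then the class number h(m) of the real quadratic field ℚ(√m) is strictly greater than 1. -/
/-!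
Since `m ≡ 2 (mod 4)` is squarefree, the ring of integers of `ℚ(√m)` is `ℤ[√m]`. As `m ≡ 2 (mod 8)`,
the norm `x² - m y² ≡ x² - 2 y² (mod 8)` is never `±3`, so `3`, of norm `9`, is irreducible in
`ℤ[√m]`. But `m ≡ 1 (mod 3)`, so `3` divides `m - 1 = (√m - 1)(√m + 1)` without dividing either
factor. Hence `ℤ[√m]` is not a principal ideal ring.
-/

open Polynomial NumberField

namespace Int

variable {d : ℤ}

theorem not_isSquare_of_emod_four (hd : d % 4 = 2 ∨ d % 4 = 3) : ¬ IsSquare d := by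
  rintro ⟨r, rfl⟩
  obtain ⟨a, rfl | rfl⟩ := Int.even_or_odd' r <;> ring_nf at hd <;> omega

theorem two_dvd_of_four_dvd_sq_sub_mul_sq_s4 (hd : d % 4 = 2 ∨ d % 4 = 3) {X Y : ℤ}
    (h : 4 ∣ X ^ 2 - d * Y ^ 2) : 2 ∣ X ∧ 2 ∣ Y := by
  obtain ⟨a, rfl | rfl⟩ := Int.even_or_odd' X <;> obtain ⟨b, rfl | rfl⟩ := Int.even_or_odd' Y <;>
    ring_nf at h <;> omega

end Int

namespace Zsqrtd

variable {d : ℤ}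

theorem natAbs_norm_ne_three (hd : d % 8 = 2) (z : ℤ√d) : z.norm.natAbs ≠ 3 := by
  have hd8 : (d : ZMod 8) = 2 := by rw [← ZMod.intCast_mod]; simp [hd]
  have hmod8 : ∀ a b : ZMod 8, a * a - 2 * b * b ≠ 3 ∧ a * a - 2 * b * b ≠ -3 := by decide
  have hz := congrArg (Int.cast : ℤ → ZMod 8) (norm_def z)
  push_cast [hd8] at hz
  obtain ⟨hne, hne'⟩ := hmod8 z.re z.im
  intro h
  rcases Int.natAbs_eq_iff.mp h with h | h <;> rw [h] at hz <;> push_cast at hz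
  · exact hne hz.symm
  · exact hne' hz.symm

theorem irreducible_three (hd : d % 8 = 2) : Irreducible (3 : ℤ√d) := by
  refine ⟨fun h ↦ by simp [← norm_eq_one_iff, norm_def] at h, fun a b hab ↦ ?_⟩
  have h9 : a.norm.natAbs * b.norm.natAbs = 9 := by
    rw [← Int.natAbs_mul, ← norm_mul, ← hab]; simp [norm_def]
  have ha := natAbs_norm_ne_three hd a
  have hb := natAbs_norm_ne_three hd b
  have : a.norm.natAbs = 1 ∨ b.norm.natAbs = 1 := by
    have : a.norm.natAbs ≤ 9 := Nat.le_of_dvd (by norm_num) ⟨_, h9.symm⟩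
    interval_cases a.norm.natAbs <;> omega
  simpa only [norm_eq_one_iff] using this

theorem not_prime_three (hd : d % 3 = 1) : ¬ Prime (3 : ℤ√d) := by
  intro h
  have hndvd : ∀ u : ℤ√d, u.re = 1 ∨ u.re = -1 → ¬ (3 : ℤ√d) ∣ sqrtd + u := by
    intro u hu hdvd
    have := ((intCast_dvd 3 _).mp (by exact_mod_cast hdvd)).1
    simp only [re_add, re_sqrtd, zero_add] at this
    omega
  obtain ⟨k, hk⟩ : (3 : ℤ) ∣ d - 1 := by omega
  have hk' : (d : ℤ√d) - 1 = 3 * k := by exact_mod_cast congrArg (Int.cast : ℤ → ℤ√d) hk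
  refine (h.dvd_or_dvd (a := sqrtd + 1) (b := sqrtd + -1) ⟨k, ?_⟩).elim
    (hndvd 1 (by simp)) (hndvd (-1) (by simp))
  linear_combination dmuld + hk'

theorem not_isPrincipalIdealRing [IsDomain (ℤ√d)] (hd8 : d % 8 = 2) (hd3 : d % 3 = 1) :
    ¬ IsPrincipalIdealRing (ℤ√d) := fun _ ↦
  not_prime_three hd3 (irreducible_three hd8).prime

end Zsqrtd

theorem isIntegral_of_mul_self_eq_intCast {R : Type*} [Ring R] {s : R} {d : ℤ}
    (hs : s * s = d) : IsIntegral ℤ s :=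
  ⟨X ^ 2 - C d, monic_X_pow_sub_C _ two_ne_zero, by
    rw [eval₂_sub, eval₂_X_pow, eval₂_C, sq, hs, eq_intCast, sub_self]⟩

section QuadraticField

variable {K : Type*} [Field K] {d : ℤ} {s : K}

noncomputable def zsqrtdToRingOfIntegers (hs : s * s = d) : ℤ√d →+* 𝓞 K :=
  Zsqrtd.lift ⟨IsIntegralClosure.mk' (𝓞 K) s (isIntegral_of_mul_self_eq_intCast hs),
    IsIntegralClosure.algebraMap_injective (𝓞 K) ℤ K
      (by rw [map_mul, IsIntegralClosure.algebraMap_mk', hs, map_intCast])⟩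

theorem coe_zsqrtdToRingOfIntegers (hs : s * s = d) (z : ℤ√d) :
    (zsqrtdToRingOfIntegers hs z : K) = z.re + z.im * s := by
  simp [zsqrtdToRingOfIntegers, IsIntegralClosure.algebraMap_mk']

variable [CharZero K]

theorem IsIntegral.exists_intCast_eq_coeff_minpoly {α : K} (h : IsIntegral ℤ α) (i : ℕ) :
    ∃ z : ℤ, (z : ℚ) = (minpoly ℚ α).coeff i :=
  ⟨(minpoly ℤ α).coeff i, by
    rw [minpoly.isIntegrallyClosed_eq_field_fractions' ℚ h, coeff_map, eq_intCast]⟩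

theorem minpoly_ratCast_add_ratCast_mul (hs : s * s = d) (hd : ¬ IsSquare (d : ℚ)) {x y : ℚ}
    (hy : y ≠ 0) :
    minpoly ℚ ((x : K) + y * s) = X ^ 2 - C (2 * x) * X + C (x ^ 2 - d * y ^ 2) := by
  symm
  apply minpoly.eq_of_irreducible_of_monic
  · apply irreducible_of_degree_le_three_of_not_isRoot
    · rw [show natDegree _ = 2 by compute_degree!]; decide
    · intro q hq
      refine hd ⟨(q - x) / y, ?_⟩
      simp only [IsRoot, eval_add, eval_sub, eval_pow, eval_mul, eval_C, eval_X] at hq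
      field_simp
      linear_combination -hq
  · simp only [map_add, map_sub, map_pow, map_mul, aeval_X, aeval_C, eq_ratCast]
    push_cast
    linear_combination y ^ 2 * hs
  · monicity!

theorem exists_intCast_eq_two_mul_and_norm (hs : s * s = d) (hd : ¬ IsSquare (d : ℚ)) {x y : ℚ}
    (h : IsIntegral ℤ ((x : K) + y * s)) :
    (∃ X : ℤ, (X : ℚ) = 2 * x) ∧ ∃ N : ℤ, (N : ℚ) = x ^ 2 - d * y ^ 2 := by
  rcases eq_or_ne y 0 with rfl | hy
  · rw [Rat.cast_zero, zero_mul, add_zero, ← eq_ratCast (algebraMap ℚ K),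
      isIntegral_algebraMap_iff (algebraMap ℚ K).injective] at h
    obtain ⟨z, hz⟩ := IsIntegrallyClosed.isIntegral_iff.mp h
    rw [eq_intCast] at hz
    subst hz
    exact ⟨⟨2 * z, by push_cast; rfl⟩, z ^ 2, by push_cast; ring⟩
  · have hcoeff := h.exists_intCast_eq_coeff_minpoly
    rw [minpoly_ratCast_add_ratCast_mul hs hd hy] at hcoeff
    obtain ⟨X, hX⟩ := hcoeff 1
    obtain ⟨N, hN⟩ := hcoeff 0
    simp only [coeff_add, coeff_sub, coeff_X_pow, coeff_C_mul_X, coeff_C] at hX hN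
    norm_num at hX hN
    exact ⟨⟨-X, by rw [Int.cast_neg, hX]; ring⟩, N, hN⟩

/- Applied to `α` and to `α * s`, the previous lemma puts `2x`, `2dy` and `x² - d y²` in `ℤ`;
squarefreeness of `d` then gives `2y ∈ ℤ`, and `d ≡ 2, 3 (mod 4)` forces `2x` and `2y` to be even. -/
theorem exists_intCast_eq_of_isIntegral (hs : s * s = d) (hsq : Squarefree d)
    (hd4 : d % 4 = 2 ∨ d % 4 = 3) {x y : ℚ} (h : IsIntegral ℤ ((x : K) + y * s)) :
    ∃ a b : ℤ, (a : ℚ) = x ∧ (b : ℚ) = y := by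
  have hd : ¬ IsSquare (d : ℚ) :=
    Rat.isSquare_intCast_iff.not.mpr (Int.not_isSquare_of_emod_four hd4)
  obtain ⟨⟨X, hX⟩, N, hN⟩ := exists_intCast_eq_two_mul_and_norm hs hd h
  have hs' : IsIntegral ℤ (((d * y : ℚ) : K) + x * s) := by
    rw [show ((d * y : ℚ) : K) + x * s = (x + y * s) * s by push_cast; linear_combination -y * hs]
    exact h.mul (isIntegral_of_mul_self_eq_intCast hs)
  obtain ⟨⟨Z, hZ⟩, -⟩ := exists_intCast_eq_two_mul_and_norm hs hd hs'
  obtain ⟨Y, rfl⟩ : d ∣ Z := by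
    refine (hsq.dvd_pow_iff_dvd two_ne_zero).mp ⟨X ^ 2 - 4 * N, ?_⟩
    exact_mod_cast (show (Z : ℚ) ^ 2 = d * (X ^ 2 - 4 * N) by rw [hZ, hX, hN]; ring)
  have hd0 : (d : ℚ) ≠ 0 := by exact_mod_cast (show d ≠ 0 by omega)
  have hY : (Y : ℚ) = 2 * y := by
    apply mul_left_cancel₀ hd0
    push_cast at hZ
    linear_combination hZ
  obtain ⟨⟨a, rfl⟩, ⟨b, rfl⟩⟩ := Int.two_dvd_of_four_dvd_sq_sub_mul_sq_s4 hd4 ⟨N, by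
    exact_mod_cast (show (X : ℚ) ^ 2 - d * Y ^ 2 = 4 * N by rw [hX, hY, hN]; ring)⟩
  push_cast at hX hY
  exact ⟨a, b, by linarith, by linarith⟩

theorem zsqrtdToRingOfIntegers_bijective (hs : s * s = d) (hsq : Squarefree d)
    (hd4 : d % 4 = 2 ∨ d % 4 = 3) (hgen : ∀ a : K, ∃ x y : ℚ, a = x + y * s) :
    Function.Bijective (zsqrtdToRingOfIntegers hs) := by
  refine ⟨Zsqrtd.lift_injective _ fun n hn ↦ Int.not_isSquare_of_emod_four hd4 ⟨n, hn⟩,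
    fun w ↦ ?_⟩
  obtain ⟨x, y, hw⟩ := hgen w
  obtain ⟨a, b, rfl, rfl⟩ := exists_intCast_eq_of_isIntegral hs hsq hd4
    (by rw [← hw]; exact w.isIntegral_coe)
  exact ⟨⟨a, b⟩, RingOfIntegers.ext (by simp [coe_zsqrtdToRingOfIntegers, hw])⟩

end QuadraticField

theorem IsSplittingField.exists_mul_self_eq_and_forall_eq {F L : Type*} [Field F] [Field L]
    [Algebra F L] {q : F} [IsSplittingField F L (X ^ 2 - C q)] :
    ∃ s : L, s * s = algebraMap F L q ∧
      ∀ a : L, ∃ x y : F, a = algebraMap F L x + algebraMap F L y * s := by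
  have hdeg : (X ^ 2 - C q).degree = 2 := degree_X_pow_sub_C two_pos q
  obtain ⟨s, hs⟩ := Splits.exists_eval_eq_zero (IsSplittingField.splits' (K := F) (L := L)
    (f := X ^ 2 - C q)) (by rw [degree_map, hdeg]; exact two_ne_zero)
  replace hs : s * s = algebraMap F L q := by
    simp only [Polynomial.map_sub, Polynomial.map_pow, map_X, map_C, eval_sub, eval_pow, eval_X,
      eval_C] at hs
    linear_combination hs
  refine ⟨s, hs, fun a ↦ ?_⟩
  have ha : a ∈ Algebra.adjoin F ((X ^ 2 - C q).rootSet L) := by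
    rw [IsSplittingField.adjoin_rootSet]; trivial
  induction ha using Algebra.adjoin_induction with
  | mem r hr =>
    rw [mem_rootSet] at hr
    have hr2 : r * r = s * s := by simpa [hs, sub_eq_zero, sq] using hr.2
    rcases mul_self_eq_mul_self_iff.mp hr2 with rfl | rfl
    · exact ⟨0, 1, by simp⟩
    · exact ⟨0, -1, by simp⟩
  | algebraMap r => exact ⟨r, 0, by simp⟩
  | add a b _ _ ha hb =>
    obtain ⟨xa, ya, rfl⟩ := ha
    obtain ⟨xb, yb, rfl⟩ := hb
    exact ⟨xa + xb, ya + yb, by simp only [map_add]; ring⟩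
  | mul a b _ _ ha hb =>
    obtain ⟨xa, ya, rfl⟩ := ha
    obtain ⟨xb, yb, rfl⟩ := hb
    refine ⟨xa * xb + q * ya * yb, xa * yb + ya * xb, ?_⟩
    simp only [map_add, map_mul]
    linear_combination (algebraMap F L ya * algebraMap F L yb) * hs

theorem stmt_4_general (n : ℕ) (m : ℕ) (hm : m = (6 * (2 * n + 1)) ^ 2 - 2)
    (hsf : Squarefree m) (K : Type*) [Field K] [NumberField K]
    (hK : IsSplittingField ℚ K (X ^ 2 - C (m : ℚ))) :
    1 < NumberField.classNumber K := by
  obtain ⟨k, hk⟩ : ∃ k, m = 288 * k + 34 := by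
    obtain ⟨k, hk⟩ := Nat.even_mul_succ_self n
    have : (6 * (2 * n + 1)) ^ 2 = 144 * (n * (n + 1)) + 36 := by ring
    exact ⟨k, by omega⟩
  obtain ⟨s, hs, hgen⟩ := IsSplittingField.exists_mul_self_eq_and_forall_eq (L := K) (q := (m : ℚ))
  replace hs : s * s = ((m : ℤ) : K) := by simpa using hs
  simp only [eq_ratCast] at hgen
  have hbij := zsqrtdToRingOfIntegers_bijective hs (Int.squarefree_natCast.mpr hsf) (by omega) hgen
  refine lt_of_le_of_ne (classNumber_pos K) fun h ↦ ?_
  rw [eq_comm, classNumber_eq_one_iff] at h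
  have := hbij.1.isDomain
  have := IsPrincipalIdealRing.of_surjective (RingEquiv.ofBijective _ hbij).symm
    (RingEquiv.surjective _)
  exact Zsqrtd.not_isPrincipalIdealRing (by omega) (by omega) this

/-- If `n ≥ 1` is an integer and `m = (6(2n+1))^2 - 2` is squarefree,
then the class number of the real quadratic field `ℚ(√m)` is strictly greater than `1`. -/
theorem stmt_4 (n : ℕ) (hn : 1 ≤ n) (m : ℕ) (hm : m = (6 * (2 * n + 1)) ^ 2 - 2)
    (hsf : Squarefree m) (K : Type*) [Field K] [NumberField K]
    (hK : IsSplittingField ℚ K (X ^ 2 - C (m : ℚ))) :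
    1 < NumberField.classNumber K :=
  stmt_4_general n m hm hsf K hK
end

section
/- Let n be a positive integer and set m = (14(2n+1))^2 + 2. Then there are no integers a, b satisfying a² − m·b² = 7. -/
/-- If `n` is a positive integer and `m = (14(2n+1))^2 + 2`, then there are no
integers `a, b` with `a² − m·b² = 7`. -/
theorem stmt_9 (n : ℤ) (hn : 0 < n) :
    ¬ ∃ a b : ℤ, a ^ 2 - ((14 * (2 * n + 1)) ^ 2 + 2) * b ^ 2 = 7 := by
  rintro ⟨a, b, h⟩
  obtain ⟨k, hk⟩ : ∃ k : ℤ, n ^ 2 + n = 2 * k := by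
    have := Int.even_mul_succ_self n
    obtain ⟨c, hc⟩ := this
    exact ⟨c, by ring_nf; ring_nf at hc; omega⟩
  have h' : a ^ 2 - (1568 * k + 198) * b ^ 2 = 7 := by
    linear_combination h + 784 * b ^ 2 * hk
  have hcast := congrArg (Int.cast : ℤ → ZMod 8) h'
  push_cast at hcast
  have key : ∀ x y z : ZMod 8, x ^ 2 - (1568 * z + 198) * y ^ 2 ≠ 7 := by decide
  exact key _ _ _ hcast
end

section
/- Let n be a positive integer and set m = (14(2n+1))^2 + 2. Then there are no integers a, b satisfying a² − m·b² = −7. -/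
lemma key_descent (k : ℤ) (hk : 42 ≤ k) :
    ∀ B : ℕ, ∀ a b : ℤ, 0 ≤ a → 0 ≤ b → b ≤ (B : ℤ) →
      a ^ 2 - (k ^ 2 + 2) * b ^ 2 = -7 → False := by
  intro B
  induction B with
  | zero =>
    intro a b ha hb hbB h
    have hb0 : b = 0 := le_antisymm (by exact_mod_cast hbB) hb
    subst hb0
    nlinarith [sq_nonneg a]
  | succ N ih =>
    intro a b ha hb hbB h
    rcases lt_or_ge b 2 with hb2 | hb2
    · -- b = 0 or b = 1
      interval_cases b
      · nlinarith [sq_nonneg a]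
      · -- a^2 = k^2 - 5, impossible for k ≥ 42
        have h1 : a < k := by nlinarith
        have h2 : a ≤ k - 1 := by omega
        nlinarith
    · -- descent step
      have hkpos : (0 : ℤ) < k := by linarith
      -- a > k * b
      have hab : k * b < a := by
        by_contra hcon
        push_neg at hcon
        have h1 : a ^ 2 ≤ (k * b) ^ 2 := by
          have : 0 ≤ k * b := by positivity
          nlinarith
        nlinarith
      set b' : ℤ := (k ^ 2 + 1) * b - k * a with hb'def
      set a' : ℤ := (k ^ 2 + 1) * a - k * (k ^ 2 + 2) * b with ha'def
      have h' : a' ^ 2 - (k ^ 2 + 2) * b' ^ 2 = -7 := by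
        simp only [ha'def, hb'def]
        linear_combination h
      -- b' > 0 : ((k²+1)b)² - (ka)² = b² + 7k² > 0
      have hb'pos : 0 < b' := by
        have hsq : ((k ^ 2 + 1) * b) ^ 2 = (k * a) ^ 2 + b ^ 2 + 7 * k ^ 2 := by
          linear_combination (-(k^2)) * h
        have hka : 0 ≤ k * a := by positivity
        have : k * a < (k ^ 2 + 1) * b := by
          by_contra hcon
          push_neg at hcon
          nlinarith
        simp only [hb'def]
        linarith
      -- b' < b
      have hb'lt : b' < b := by
        have : k * (k * b) < k * a := by
          exact mul_lt_mul_of_pos_left hab hkpos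
        simp only [hb'def]
        nlinarith
      have hb'le : b' ≤ (N : ℤ) := by
        have : b ≤ (N : ℤ) + 1 := by push_cast at hbB ⊢; linarith
        omega
      have habs : |a'| ^ 2 - (k ^ 2 + 2) * b' ^ 2 = -7 := by
        rw [sq_abs]; exact h'
      exact ih |a'| b' (abs_nonneg _) (le_of_lt hb'pos) hb'le habs

/-- If `n` is a positive integer and `m = (14(2n+1))^2 + 2`, then there are no
integers `a, b` with `a² − m·b² = −7`. -/
theorem stmt_10 (n : ℤ) (hn : 0 < n) :
    ¬ ∃ a b : ℤ, a ^ 2 - ((14 * (2 * n + 1)) ^ 2 + 2) * b ^ 2 = -7 := by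
  rintro ⟨a, b, h⟩
  have hk : (42 : ℤ) ≤ 14 * (2 * n + 1) := by linarith
  have habs : |a| ^ 2 - ((14 * (2 * n + 1)) ^ 2 + 2) * |b| ^ 2 = -7 := by
    rw [sq_abs, sq_abs]; exact h
  exact key_descent (14 * (2 * n + 1)) hk b.natAbs |a| |b| (abs_nonneg _) (abs_nonneg _)
    (le_of_eq (Int.abs_eq_natAbs b)) habs
end

section
/- Let n ≥ 1 be an integer and set m = (3(2n+1))^2 + 1. Then there are no integers a, b satisfying a² − m·b² = 3 or a² − m·b² = −3. -/
lemma aux8 : ∀ x y c : ZMod 8,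
    x ^ 2 - ((3 * (2 * c + 1)) ^ 2 + 1) * y ^ 2 ≠ 3 ∧
    x ^ 2 - ((3 * (2 * c + 1)) ^ 2 + 1) * y ^ 2 ≠ -3 := by decide

/-- If `n ≥ 1` is an integer and `m = (3(2n+1))^2 + 1`, then there are no
integers `a, b` with `a² − m·b² = 3` or `a² − m·b² = −3`. -/
theorem stmt_11 (n : ℤ) (hn : 1 ≤ n) :
    ¬ ∃ a b : ℤ, a ^ 2 - ((3 * (2 * n + 1)) ^ 2 + 1) * b ^ 2 = 3 ∨
      a ^ 2 - ((3 * (2 * n + 1)) ^ 2 + 1) * b ^ 2 = -3 := by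
  rintro ⟨a, b, h | h⟩ <;>
  · have h8 := congrArg (Int.cast : ℤ → ZMod 8) h
    push_cast at h8
    first
      | exact (aux8 a b n).1 h8
      | exact (aux8 a b n).2 h8
end

section
/- Let n ≥ 1 be an integer and set m = (6(2n+1))^2 − 2. Then there are no integers a, b satisfying a² − m·b² = 3. -/
/-- If `n ≥ 1` is an integer and `m = (6(2n+1))^2 − 2`, then there are no
integers `a, b` with `a² − m·b² = 3`. -/
theorem stmt_12 (n : ℤ) (hn : 1 ≤ n) :
    ¬ ∃ a b : ℤ, a ^ 2 - ((6 * (2 * n + 1)) ^ 2 - 2) * b ^ 2 = 3 := by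
  rintro ⟨a, b, h⟩
  have h8 : ∀ x y z : ZMod 8, x ^ 2 - ((6 * (2 * y + 1)) ^ 2 - 2) * z ^ 2 ≠ 3 := by decide
  apply h8 (a : ZMod 8) (n : ZMod 8) (b : ZMod 8)
  have := congrArg (fun t : ℤ => (t : ZMod 8)) h
  push_cast at this
  exact this
end

section
/- For every positive integer n, with t = 392n² + 392n + 99, the congruence a² ≡ 7 (mod t) has no integer solution a; equivalently, the Jacobi symbol (7/t) equals −1. -/
/-- For every positive integer `n`, with `t = 392n² + 392n + 99`, the
congruence `a² ≡ 7 (mod t)` has no integer solution; equivalently, the Jacobi symbol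
`(7/t)` equals `−1`. -/
theorem stmt_14 (n : ℕ) (hn : 0 < n) :
    (¬ ∃ a : ℤ, a ^ 2 ≡ 7 [ZMOD ((392 * n ^ 2 + 392 * n + 99 : ℕ) : ℤ)]) ∧
      jacobiSym 7 (392 * n ^ 2 + 392 * n + 99) = -1 := by
  set t : ℕ := 392 * n ^ 2 + 392 * n + 99 with ht
  have h4 : t % 4 = 3 := by omega
  have hj : jacobiSym 7 t = -1 := by
    rw [show ((7 : ℤ)) = ((7 : ℕ) : ℤ) by norm_num,
      jacobiSym.quadratic_reciprocity_three_mod_four (by norm_num) h4,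
      jacobiSym.mod_left t 7]
    have : ((t : ℤ) % ((7:ℕ) : ℤ)) = 1 := by push_cast; omega
    rw [this]; simp
  refine ⟨?_, hj⟩
  rintro ⟨a, ha⟩
  have hns := ZMod.nonsquare_of_jacobiSym_eq_neg_one hj
  apply hns
  have : ((7 : ℤ) : ZMod t) = ((a ^ 2 : ℤ) : ZMod t) :=
    (ZMod.intCast_eq_intCast_iff' _ _ _).mpr ha.symm
  rw [this]
  push_cast
  exact ⟨(a : ZMod t), (sq (a : ZMod t)).symm ▸ (sq (a : ZMod t))⟩
end
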